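/- For a real number $q$ with $q > 0$ and $q \ne 1$, and for all positive integers $n$, $r$, $p$, $\sum_{\ell=1}^{n} q^{\ell-1} ([\ell]_q)^{p} H_{\ell}^{(r)}(q) = A_q(p,r,n) H_n^{(r)}(q) - B_q(p,r,n)$, where $A_q(p,r,n) = \sum_{\ell=0}^{p} q^{\binom{\ell}{2}+\ell-1} S_q(p,\ell)\, [\ell]_q!\, \binom{n+r-1}{r-1}_q^{-1} \binom{r+\ell-1}{\ell}_q \binom{r+n}{r+\ell}_q$ and $B_q(p,r,n) = \sum_{\ell=0}^{p} \frac{q^{\binom{\ell}{2}+r+2\ell-2}}{[r+\ell]_q} S_q(p,\ell)\, [\ell]_q!\, \binom{r+\ell-1}{\ell}_q \binom{r+n-1}{r+\ell}_q$. -/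

import Mathlib

/-- The `q`-integer `[n]_q = (1 - q^n)/(1 - q)`. -/
noncomputable def qint (q : ℝ) (n : ℕ) : ℝ := (1 - q ^ n) / (1 - q)

/-- The `q`-factorial `[n]_q! = [n]_q [n-1]_q ⋯ [1]_q`, with `[0]_q! = 1`. -/
noncomputable def qfact (q : ℝ) : ℕ → ℝ
  | 0 => 1
  | n + 1 => qint q (n + 1) * qfact q n

/-- The `q`-binomial coefficient `C(n,k)_q = [n]_q!/([k]_q! [n-k]_q!)`, equal to `0` for `k > n`. -/
noncomputable def qbinom (q : ℝ) (n k : ℕ) : ℝ :=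
  if k ≤ n then qfact q n / (qfact q k * qfact q (n - k)) else 0

/-- The `q`-hyperharmonic numbers: `H_n^{(0)}(q) = 1/(q [n]_q)` and
`H_n^{(r)}(q) = ∑_{j=1}^n q^j H_j^{(r-1)}(q)` for `r ≥ 1` (so `H_0^{(r)}(q) = 0`). -/
noncomputable def qhyp (q : ℝ) : ℕ → ℕ → ℝ
  | 0, n => 1 / (q * qint q n)
  | r + 1, n => ∑ j ∈ Finset.Icc 1 n, q ^ j * qhyp q r j

/-- The `q`-Stirling numbers of the second kind, defined by the recurrence
`S_q(n+1, m) = S_q(n, m-1) + [m]_q S_q(n, m)` with `S_q(n,0) = S_q(0,n) = δ_{n,0}`. -/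
noncomputable def qS2 (q : ℝ) : ℕ → ℕ → ℝ
  | 0, 0 => 1
  | 0, _ + 1 => 0
  | _ + 1, 0 => 0
  | n + 1, m + 1 => qS2 q n m + qint q (m + 1) * qS2 q n (m + 1)

/-- `A_q(p,r,n) = ∑_{ℓ=0}^p q^{C(ℓ,2)+ℓ-1} S_q(p,ℓ) [ℓ]_q! C(n+r-1, r-1)_q⁻¹ C(r+ℓ-1, ℓ)_q C(r+n, r+ℓ)_q`. -/
noncomputable def Aq (q : ℝ) (p r n : ℕ) : ℝ :=
  ∑ ℓ ∈ Finset.range (p + 1),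
    q ^ ((ℓ.choose 2 : ℤ) + (ℓ : ℤ) - 1) * qS2 q p ℓ * qfact q ℓ *
      (qbinom q (n + r - 1) (r - 1))⁻¹ * qbinom q (r + ℓ - 1) ℓ * qbinom q (r + n) (r + ℓ)

/-- `B_q(p,r,n) = ∑_{ℓ=0}^p (q^{C(ℓ,2)+r+2ℓ-2}/[r+ℓ]_q) S_q(p,ℓ) [ℓ]_q! C(r+ℓ-1, ℓ)_q C(r+n-1, r+ℓ)_q`. -/
noncomputable def Bq (q : ℝ) (p r n : ℕ) : ℝ :=
  ∑ ℓ ∈ Finset.range (p + 1),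
    q ^ ((ℓ.choose 2 : ℤ) + (r : ℤ) + 2 * (ℓ : ℤ) - 2) / qint q (r + ℓ) * qS2 q p ℓ * qfact q ℓ *
      qbinom q (r + ℓ - 1) ℓ * qbinom q (r + n - 1) (r + ℓ)


/-! Expanding `[ℓ]_q ^ p` in the basis `q ^ C(k,2) [k]_q! C(ℓ,k)_q` via the `q`-Stirling numbers
reduces the identity to the sums `∑_{j ≤ n} q^j C(j,k)_q H_j^{(r)}(q)`, one for each `k`. These are
evaluated in closed form by induction on `n`, because the hyperharmonic numbers of a fixed order
satisfy the first-order recurrence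
`[n+1]_q H_{n+1}^{(r+1)} = [n+r+1]_q H_n^{(r+1)} + q^{n+r} C(n+r,r)_q`. -/

open Finset

section QBinomial

variable {q : ℝ}

lemma qint_zero : qint q 0 = 0 := by simp [qint]

lemma qint_one (hq1 : q ≠ 1) : qint q 1 = 1 :=
  by simpa [qint] using div_self (sub_ne_zero.2 hq1.symm)

lemma qint_add (hq1 : q ≠ 1) (a b : ℕ) : qint q (a + b) = qint q a + q ^ a * qint q b := by
  have : 1 - q ≠ 0 := sub_ne_zero.2 hq1.symm
  simp only [qint, pow_add]
  field_simp
  ring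

lemma qint_pos (hq : 0 < q) (hq1 : q ≠ 1) {n : ℕ} (hn : n ≠ 0) : 0 < qint q n := by
  rcases hq1.lt_or_gt with h | h
  · exact div_pos (sub_pos.2 (pow_lt_one₀ hq.le h hn)) (sub_pos.2 h)
  · exact div_pos_of_neg_of_neg (sub_neg.2 (one_lt_pow₀ h hn)) (sub_neg.2 h)

lemma qfact_succ (n : ℕ) : qfact q (n + 1) = qint q (n + 1) * qfact q n := rfl

lemma qfact_pos (hq : 0 < q) (hq1 : q ≠ 1) (n : ℕ) : 0 < qfact q n := by
  induction n with
  | zero => exact one_pos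
  | succ n ih => exact mul_pos (qint_pos hq hq1 n.succ_ne_zero) ih

lemma qint_succ_ne_zero (hq : 0 < q) (hq1 : q ≠ 1) (n : ℕ) : qint q (n + 1) ≠ 0 :=
  (qint_pos hq hq1 n.succ_ne_zero).ne'

lemma qfact_ne_zero (hq : 0 < q) (hq1 : q ≠ 1) (n : ℕ) : qfact q n ≠ 0 :=
  (qfact_pos hq hq1 n).ne'

lemma qbinom_of_add_eq {n k m : ℕ} (h : k + m = n) :
    qbinom q n k = qfact q n / (qfact q k * qfact q m) := by
  rw [qbinom, if_pos (by omega), show n - k = m by omega]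

lemma qbinom_ne_zero (hq : 0 < q) (hq1 : q ≠ 1) {n k : ℕ} (h : k ≤ n) : qbinom q n k ≠ 0 := by
  rw [qbinom, if_pos h]
  exact div_ne_zero (qfact_ne_zero hq hq1 n)
    (mul_ne_zero (qfact_ne_zero hq hq1 k) (qfact_ne_zero hq hq1 _))

lemma qbinom_of_lt {n k : ℕ} (h : n < k) : qbinom q n k = 0 := if_neg h.not_ge

lemma qbinom_zero_right (hq : 0 < q) (hq1 : q ≠ 1) (n : ℕ) : qbinom q n 0 = 1 := by
  rw [qbinom_of_add_eq (zero_add n), qfact, one_mul, div_self (qfact_pos hq hq1 n).ne']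

lemma qbinom_self (hq : 0 < q) (hq1 : q ≠ 1) (n : ℕ) : qbinom q n n = 1 := by
  rw [qbinom_of_add_eq (add_zero n), qfact, mul_one, div_self (qfact_pos hq hq1 n).ne']

lemma qbinom_succ_succ (hq : 0 < q) (hq1 : q ≠ 1) (m k : ℕ) :
    qbinom q (m + k + 1) (k + 1) = qbinom q (m + k) (k + 1) + q ^ m * qbinom q (m + k) k := by
  rcases m with _ | m
  · simp [qbinom_of_lt, qbinom_self hq hq1]
  rw [qbinom_of_add_eq (show k + 1 + (m + 1) = m + 1 + k + 1 by ring),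
    qbinom_of_add_eq (show k + 1 + m = m + 1 + k by ring),
    qbinom_of_add_eq (show k + (m + 1) = m + 1 + k by ring),
    qfact_succ (m + 1 + k), qfact_succ k, qfact_succ m,
    show m + 1 + k + 1 = (m + 1) + (k + 1) by ring, qint_add hq1 (m + 1) (k + 1),
    show m + 1 + k = m + k + 1 by ring, qfact_succ (m + k)]
  field_simp [qfact_ne_zero hq hq1, qint_succ_ne_zero hq hq1]

lemma qint_sub_qint_mul_qbinom (hq : 0 < q) (hq1 : q ≠ 1) (n k : ℕ) :
    (qint q n - qint q k) * qbinom q n k = q ^ k * qint q (k + 1) * qbinom q n (k + 1) := by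
  obtain h | ⟨m, rfl⟩ : n ≤ k ∨ ∃ m, n = k + m + 1 :=
    (le_or_gt n k).imp_right fun h => ⟨n - k - 1, by omega⟩
  · obtain h | rfl := h.lt_or_eq
    · simp [qbinom_of_lt h, qbinom_of_lt (h.trans k.lt_succ_self)]
    · simp [qbinom_of_lt n.lt_succ_self]
  rw [qbinom_of_add_eq (show k + (m + 1) = k + m + 1 by ring),
    qbinom_of_add_eq (show k + 1 + m = k + m + 1 by ring), qfact_succ k, qfact_succ m,
    show k + m + 1 = k + (m + 1) by ring, qint_add hq1]
  field_simp [qfact_ne_zero hq hq1, qint_succ_ne_zero hq hq1]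
  ring

lemma qint_succ_mul_qbinom_succ_succ (hq : 0 < q) (hq1 : q ≠ 1) (n k : ℕ) :
    qint q (k + 1) * qbinom q (n + 1) (k + 1) = qint q (n + 1) * qbinom q n k := by
  obtain h | ⟨m, rfl⟩ : n < k ∨ ∃ m, n = k + m :=
    (lt_or_ge n k).imp_right fun h => ⟨n - k, by omega⟩
  · simp [qbinom_of_lt h, qbinom_of_lt (Nat.succ_lt_succ h)]
  rw [qbinom_of_add_eq (show k + 1 + m = k + m + 1 by ring), qbinom_of_add_eq rfl,
    qfact_succ k, qfact_succ (k + m)]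
  field_simp [qfact_ne_zero hq hq1, qint_succ_ne_zero hq hq1]

lemma qbinom_mul_qbinom (hq : 0 < q) (hq1 : q ≠ 1) (n k a : ℕ) :
    qbinom q n k * qbinom q (n + a) a = qbinom q (a + k) k * qbinom q (n + a) (a + k) := by
  obtain h | ⟨m, rfl⟩ : n < k ∨ ∃ m, n = k + m :=
    (lt_or_ge n k).imp_right fun h => ⟨n - k, by omega⟩
  · simp [qbinom_of_lt h, qbinom_of_lt (show n + a < a + k by omega)]
  rw [qbinom_of_add_eq rfl, qbinom_of_add_eq (show a + (k + m) = k + m + a by ring),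
    qbinom_of_add_eq (show k + a = a + k by ring),
    qbinom_of_add_eq (show a + k + m = k + m + a by ring)]
  field_simp [qfact_ne_zero hq hq1]

lemma qpow_mul_qint_mul_qbinom_succ_sub (hq : 0 < q) (hq1 : q ≠ 1) (n k a : ℕ) :
    q ^ k * (qint q (n + 1 + a) * qbinom q (n + 1) k - qint q (n + 1) * qbinom q n k) =
      q ^ (n + 1) * qint q (k + a) * qbinom q (n + 1) k := by
  obtain h | rfl | ⟨m, rfl⟩ : n + 1 < k ∨ k = n + 1 ∨ ∃ m, n = k + m := by
    rcases lt_trichotomy (n + 1) k with h | h | h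
    exacts [.inl h, .inr (.inl h.symm), .inr (.inr ⟨n - k, by omega⟩)]
  · simp [qbinom_of_lt h, qbinom_of_lt (n.lt_succ_self.trans h)]
  · simp [qbinom_self hq hq1, qbinom_of_lt n.lt_succ_self, add_comm]
  rw [qbinom_of_add_eq (show k + (m + 1) = k + m + 1 by ring), qbinom_of_add_eq rfl,
    qfact_succ (k + m), qfact_succ m, show k + m + 1 + a = (m + 1) + (k + a) by ring, qint_add hq1]
  field_simp [qfact_ne_zero hq hq1, qint_succ_ne_zero hq hq1]
  ring

lemma qpow_mul_qbinom_succ_sub_mul_qbinom (hq : 0 < q) (hq1 : q ≠ 1) (n k a : ℕ) :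
    q ^ k * (qbinom q (n + a + 1) (a + k + 1) - qbinom q (n + a) (a + k + 1)) *
        qbinom q (a + k) k =
      q ^ n * qbinom q n k * qbinom q (n + a) a := by
  obtain h | ⟨m, rfl⟩ : n < k ∨ ∃ m, n = k + m :=
    (lt_or_ge n k).imp_right fun h => ⟨n - k, by omega⟩
  · simp [qbinom_of_lt h, qbinom_of_lt (show n + a + 1 < a + k + 1 by omega),
      qbinom_of_lt (show n + a < a + k + 1 by omega)]
  have pascal := qbinom_succ_succ hq hq1 m (a + k)
  rw [show m + (a + k) = k + m + a by ring] at pascal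
  rw [pascal, mul_assoc _ (qbinom q (k + m) k), qbinom_mul_qbinom hq hq1, pow_add]
  ring

end QBinomial

section QStirling

variable {q : ℝ}

lemma qS2_of_lt {p k : ℕ} (h : p < k) : qS2 q p k = 0 := by
  induction p generalizing k with
  | zero => obtain ⟨k, rfl⟩ := Nat.exists_eq_succ_of_ne_zero h.ne'; rfl
  | succ p ih =>
    obtain ⟨k, rfl⟩ := Nat.exists_eq_succ_of_ne_zero (p.succ_pos.trans h).ne'
    rw [qS2, ih (by omega), ih (by omega), mul_zero, add_zero]

lemma pow_eq_sum_qS2_mul {x : ℝ} {t : ℕ → ℝ} (h0 : t 0 = 1)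
    (ht : ∀ k, x * t k = t (k + 1) + qint q k * t k) (p : ℕ) :
    x ^ p = ∑ k ∈ range (p + 1), qS2 q p k * t k := by
  induction p with
  | zero => simp [qS2, h0]
  | succ p ih =>
    have shift : ∑ k ∈ range (p + 1), qint q (k + 1) * qS2 q p (k + 1) * t (k + 1) =
        ∑ k ∈ range (p + 1), qint q k * qS2 q p k * t k := by
      have h := (sum_range_succ' (fun k => qint q k * qS2 q p k * t k) (p + 1)).symm.trans
        (sum_range_succ _ (p + 1))
      simpa [qint_zero, qS2_of_lt p.lt_succ_self] using h
    rw [sum_range_succ', pow_succ', ih, mul_sum]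
    simp only [qS2, add_mul, sum_add_distrib, shift]
    rw [zero_mul, add_zero, ← sum_add_distrib]
    refine sum_congr rfl fun k _ => ?_
    rw [mul_left_comm, ht]
    ring

lemma qint_pow_eq_sum_qS2 (hq : 0 < q) (hq1 : q ≠ 1) (n p : ℕ) :
    qint q n ^ p =
      ∑ k ∈ range (p + 1), qS2 q p k * (q ^ k.choose 2 * qfact q k * qbinom q n k) := by
  refine pow_eq_sum_qS2_mul (by simp [qfact, qbinom_zero_right hq hq1]) (fun k => ?_) p
  have h := qint_sub_qint_mul_qbinom hq hq1 n k
  rw [Nat.choose_succ_succ', Nat.choose_one_right, pow_add, qfact_succ]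
  linear_combination q ^ k.choose 2 * qfact q k * h

end QStirling

section QHyperharmonic

variable {q : ℝ}

lemma qhyp_succ_zero (r : ℕ) : qhyp q (r + 1) 0 = 0 := by simp [qhyp]

lemma qhyp_succ_succ (r n : ℕ) :
    qhyp q (r + 1) (n + 1) = qhyp q (r + 1) n + q ^ (n + 1) * qhyp q r (n + 1) :=
  sum_Icc_succ_top (by omega) _

lemma qhyp_succ_one (hq : 0 < q) (hq1 : q ≠ 1) (r : ℕ) : qhyp q (r + 1) 1 = q ^ r := by
  induction r with
  | zero => simp [qhyp, qint_one hq1, hq.ne']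
  | succ r ih => rw [qhyp_succ_succ, qhyp_succ_zero, ih]; ring

lemma qint_succ_mul_qhyp_succ_succ (hq : 0 < q) (hq1 : q ≠ 1) (r n : ℕ) :
    qint q (n + 1) * qhyp q (r + 1) (n + 1) =
      qint q (n + r + 1) * qhyp q (r + 1) n + q ^ (n + r) * qbinom q (n + r) r := by
  induction r generalizing n with
  | zero =>
    rw [qhyp_succ_succ, qbinom_zero_right hq hq1, qhyp]
    field_simp [qint_succ_ne_zero hq hq1, hq.ne']
    ring
  | succ r ihr =>
    induction n with
    | zero =>
      simp [qhyp_succ_one hq hq1, qhyp_succ_zero, qint_one hq1, qbinom_self hq hq1]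
    | succ n ihn =>
      have step := ihr (n + 1)
      have pascal := qbinom_succ_succ hq hq1 (n + 1) r
      have h1 := qint_add hq1 1 (n + 1)
      have h2 := qint_add hq1 1 (n + 1 + r + 1)
      have h3 := qhyp_succ_succ (q := q) (r + 1) (n + 1)
      have h4 := qhyp_succ_succ (q := q) (r + 1) n
      simp only [qint_one hq1, pow_one, show n + (r + 1) = n + 1 + r by ring,
        show 1 + (n + 1) = n + 1 + 1 by ring,
        show 1 + (n + 1 + r + 1) = n + 1 + r + 1 + 1 by ring] at ihn h1 h2 ⊢
      linear_combination qint q (n + 1 + 1) * h3 + q ^ (n + 1 + 1) * step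
        - q * qint q (n + 1 + r + 1) * h4 + q * ihn - q ^ (n + 1 + r + 1) * pascal
        + qhyp q (r + 1 + 1) (n + 1) * (h1 - h2)

lemma qint_mul_sum_qpow_mul_qbinom_mul_qhyp (hq : 0 < q) (hq1 : q ≠ 1) (r k n : ℕ) :
    qint q (r + k + 1) * ∑ j ∈ Icc 1 n, q ^ j * qbinom q j k * qhyp q (r + 1) j =
      q ^ k * qint q (n + r + 1) * qbinom q n k * qhyp q (r + 1) n -
        q ^ (r + 2 * k) * qbinom q (r + k) k * qbinom q (n + r) (r + k + 1) := by
  induction n with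
  | zero => simp [qhyp_succ_zero, qbinom_of_lt]
  | succ n ih =>
    have recurrence := qint_succ_mul_qhyp_succ_succ hq hq1 r n
    have coeff := qpow_mul_qint_mul_qbinom_succ_sub hq hq1 n k (r + 1)
    have const := qpow_mul_qbinom_succ_sub_mul_qbinom hq hq1 n k r
    rw [show n + 1 + (r + 1) = n + r + 1 + 1 by ring, show k + (r + 1) = r + k + 1 by ring] at coeff
    rw [sum_Icc_succ_top (by omega), mul_add, ih, show n + 1 + r = n + r + 1 by ring]
    linear_combination -qhyp q (r + 1) (n + 1) * coeff + q ^ (r + k) * const -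
      q ^ k * qbinom q n k * recurrence

/-- The right-hand side is written in the shape of the `k`-th summands of `Aq` and `Bq`. -/
lemma sum_qpow_mul_qbinom_mul_qhyp (hq : 0 < q) (hq1 : q ≠ 1) (r k n : ℕ) :
    ∑ j ∈ Icc 1 n, q ^ j * qbinom q j k * qhyp q (r + 1) j =
      q ^ k * (qbinom q (n + r) r)⁻¹ * qbinom q (r + k) k * qbinom q (n + r + 1) (r + k + 1) *
          qhyp q (r + 1) n -
        q ^ (r + 2 * k) / qint q (r + k + 1) * qbinom q (r + k) k *
          qbinom q (n + r) (r + k + 1) := by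
  have absorb := qint_succ_mul_qbinom_succ_succ hq hq1 (n + r) (r + k)
  have swap := qbinom_mul_qbinom hq hq1 n k r
  have hC := qbinom_ne_zero hq hq1 (Nat.le_add_left r n)
  have hI := qint_succ_ne_zero hq hq1 (r + k)
  rw [eq_sub_iff_add_eq, ← mul_right_inj' hI, mul_add,
    qint_mul_sum_qpow_mul_qbinom_mul_qhyp hq hq1]
  field_simp
  linear_combination
    (-q ^ k * qhyp q (r + 1) n) * (qbinom q (r + k) k * absorb - qint q (n + r + 1) * swap)

end QHyperharmonic

theorem sum_qpow_qint_pow_mul_qhyp_general (q : ℝ) (hq : 0 < q) (hq1 : q ≠ 1) (n r p : ℕ)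
    (hr : 1 ≤ r) :
    ∑ ℓ ∈ Finset.Icc 1 n, q ^ (ℓ - 1) * (qint q ℓ) ^ p * qhyp q r ℓ =
      Aq q p r n * qhyp q r n - Bq q p r n := by
  obtain ⟨r, rfl⟩ := Nat.exists_eq_add_of_le' hr
  calc ∑ ℓ ∈ Icc 1 n, q ^ (ℓ - 1) * qint q ℓ ^ p * qhyp q (r + 1) ℓ
      = ∑ k ∈ range (p + 1), qS2 q p k * q ^ k.choose 2 * qfact q k * q⁻¹ *
          ∑ ℓ ∈ Icc 1 n, q ^ ℓ * qbinom q ℓ k * qhyp q (r + 1) ℓ := by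
        simp_rw [qint_pow_eq_sum_qS2 hq hq1, mul_sum, sum_mul]
        rw [sum_comm]
        refine sum_congr rfl fun k _ => sum_congr rfl fun ℓ hℓ => ?_
        rw [pow_sub₀ q hq.ne' (mem_Icc.1 hℓ).1]
        ring
    _ = Aq q p (r + 1) n * qhyp q (r + 1) n - Bq q p (r + 1) n := by
        simp only [Aq, Bq, sum_mul, ← sum_sub_distrib, show r + 1 + n - 1 = n + r by omega]
        refine sum_congr rfl fun k _ => ?_
        rw [sum_qpow_mul_qbinom_mul_qhyp hq hq1, show n + (r + 1) - 1 = n + r by omega,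
          show r + 1 - 1 = r by omega, show r + 1 + k - 1 = r + k by omega,
          show r + 1 + n = n + r + 1 by omega, show r + 1 + k = r + k + 1 by omega,
          show (k.choose 2 : ℤ) + k - 1 = ((k.choose 2 + k : ℕ) : ℤ) - 1 by push_cast; ring,
          show (k.choose 2 : ℤ) + (r + 1 : ℕ) + 2 * k - 2 =
            ((k.choose 2 + (r + 2 * k) : ℕ) : ℤ) - 1 by push_cast; ring,
          zpow_sub_one₀ hq.ne', zpow_sub_one₀ hq.ne', zpow_natCast, zpow_natCast, pow_add, pow_add]
        ring

/-- For `q > 0`, `q ≠ 1` and positive integers `n, r, p`,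
`∑_{ℓ=1}^n q^{ℓ-1} ([ℓ]_q)^p H_ℓ^{(r)}(q) = A_q(p,r,n) H_n^{(r)}(q) - B_q(p,r,n)`. -/
theorem sum_qpow_qint_pow_mul_qhyp (q : ℝ) (hq : 0 < q) (hq1 : q ≠ 1) (n r p : ℕ)
    (hn : 1 ≤ n) (hr : 1 ≤ r) (hp : 1 ≤ p) :
    ∑ ℓ ∈ Finset.Icc 1 n, q ^ (ℓ - 1) * (qint q ℓ) ^ p * qhyp q r ℓ =
      Aq q p r n * qhyp q r n - Bq q p r n :=
  sum_qpow_qint_pow_mul_qhyp_general q hq hq1 n r p hr
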